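/- The ℤ-linear map ι: S_• → T_• sending α ∈ S_n to ({α(1)},…,{α(n)}) is injective and is a morphism of graded bialgebras from the Malvenuto–Reutenauer Hopf algebra (S_•, ∗, δ̄) to (T_•, ∗̂, δ̄): for all permutations α, β one has ι(α ∗ β) = ι(α) ∗̂ ι(β), and δ̄(ι(α)) = (ι ⊗ ι)(δ̄(α)). Hence the Malvenuto–Reutenauer Hopf algebra embeds into (T_•, ∗̂, δ̄) as a Hopf subalgebra. -/

import Mathlib

set_option linter.unreachableTactic false
set_option linter.unusedTactic false
set_option maxHeartbeats 1000000


open Finset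

/-- Candidate set compositions: lists of finite sets of positive naturals. -/
abbrev SC : Type := List (Finset ℕ)

/-- The underlying (ground) set of a list of blocks. -/
def ground (L : SC) : Finset ℕ := L.foldr (· ∪ ·) ∅

/-- `L` is a set composition of `[n] = {1,…,n}`. -/
def IsSetComp (n : ℕ) (L : SC) : Prop :=
  (∀ B ∈ L, B.Nonempty) ∧ L.Pairwise Disjoint ∧ ground L = Finset.Icc 1 n

/-- The degree of a set composition (largest element of its ground set). -/
def maxG (L : SC) : ℕ := (ground L).sup id

/-- The 1-based rank of `x` inside the finite set `A` (the position of `x` in the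
increasing enumeration of `A`, when `x ∈ A`); this is the order preserving
relabelling `A → [|A|]`. -/
def rankIn (A : Finset ℕ) (x : ℕ) : ℕ := (A.filter (· ≤ x)).card

/-- `P|_A` : intersect the blocks with `A`, delete the empty intersections, and
relabel along the order preserving bijection `A → [|A|]`. -/
def restrictSC (A : Finset ℕ) (L : SC) : SC :=
  (L.map fun B => (B ∩ A).image (rankIn A)).filter fun B => decide B.Nonempty

/-- Shift all entries of all blocks by `p`. -/
def shiftSC (p : ℕ) (L : SC) : SC := L.map (Finset.image (· + p))

/-- The restricted product `∗̄` on set compositions: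
`P ∗̄ Q = (P₁,…,P_k, p+Q₁,…,p+Q_l)` for `P ∈ Comp_p`. -/
def barMul (P Q : SC) : SC := P ++ shiftSC (maxG P) Q

/-- The order-preserving relabelling map `S → T` (`is_{S,T}`), for finite sets
of equal cardinality. -/
def relabelFun (S T : Finset ℕ) (x : ℕ) : ℕ := (T.sort (· ≤ ·)).getD (rankIn S x - 1) 0

/-- Relabel a set composition of `S` along the order-preserving bijection `S → T`. -/
def relabelSC (S T : Finset ℕ) (L : SC) : SC := L.map (Finset.image (relabelFun S T))

variable (R : Type) [CommRing R]

/-- The free module with basis indexed by lists of blocks; the twisted descent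
algebra `T_•` is its submodule spanned by the set compositions. -/
abbrev FM := SC →₀ R

/-- `T_•` as a submodule: the span of the set compositions. -/
noncomputable def Tspan : Submodule R (FM R) :=
  Submodule.span R {f : FM R | ∃ n P, IsSetComp n P ∧ f = Finsupp.single P 1}

/-- The restricted product `∗̄` as a bilinear map. -/
noncomputable def barL : FM R →ₗ[R] FM R →ₗ[R] FM R :=
  Finsupp.lift _ R SC fun P => Finsupp.lift _ R SC fun Q => Finsupp.single (barMul P Q) 1

/-- The symmetrized product `∗̂` on basis elements:
`P ∗̂ Q = Σ is_{[p],A}(P) ∗ is_{[q],B}(Q)` over all `A ⊔ B = [p+q]`, `|A| = p`. -/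
noncomputable def hatB (P Q : SC) : FM R :=
  ∑ A ∈ (Finset.Icc 1 (maxG P + maxG Q)).powerset.filter (fun A => A.card = maxG P),
    Finsupp.single
      (relabelSC (Finset.Icc 1 (maxG P)) A P ++
        relabelSC (Finset.Icc 1 (maxG Q)) ((Finset.Icc 1 (maxG P + maxG Q)) \ A) Q) 1

/-- The symmetrized product `∗̂` as a bilinear map. -/
noncomputable def hatL : FM R →ₗ[R] FM R →ₗ[R] FM R :=
  Finsupp.lift _ R SC fun P => Finsupp.lift _ R SC fun Q => hatB R P Q

/-- `T_• ⊗ T_•`, realized as the free module on pairs of basis elements. -/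
abbrev FM2 := (SC × SC) →₀ R

/-- `T_• ⊗ T_• ⊗ T_•`, realized as the free module on triples of basis elements. -/
abbrev FM3 := (SC × SC × SC) →₀ R

/-- The restricted coproduct `δ̄ (P) = Σ_{p=0}^n P|_{[p]} ⊗ P|_{{p+1,…,n}}`. -/
noncomputable def dBarL : FM R →ₗ[R] FM2 R :=
  Finsupp.lift _ R SC fun P =>
    ∑ p ∈ Finset.range (maxG P + 1),
      Finsupp.single
        (restrictSC (Finset.Icc 1 p) P, restrictSC (Finset.Icc (p+1) (maxG P)) P) 1

/-- The cosymmetrized coproduct `δ̂ (P) = Σ_{A ⊔ B = [n]} P|_A ⊗ P|_B`. -/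
noncomputable def dHatL : FM R →ₗ[R] FM2 R :=
  Finsupp.lift _ R SC fun P =>
    ∑ A ∈ (Finset.Icc 1 (maxG P)).powerset,
      Finsupp.single (restrictSC A P, restrictSC ((Finset.Icc 1 (maxG P)) \ A) P) 1

/-- Apply a coproduct to the first tensor factor:  `d ⊗ id : T⊗T → T⊗T⊗T`. -/
noncomputable def applyFst (d : FM R →ₗ[R] FM2 R) : FM2 R →ₗ[R] FM3 R :=
  Finsupp.lift _ R (SC × SC) fun PQ =>
    Finsupp.mapDomain (fun RS : SC × SC => (RS.1, RS.2, PQ.2)) (d (Finsupp.single PQ.1 1))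

/-- Apply a coproduct to the second tensor factor:  `id ⊗ d : T⊗T → T⊗T⊗T`. -/
noncomputable def applySnd (d : FM R →ₗ[R] FM2 R) : FM2 R →ₗ[R] FM3 R :=
  Finsupp.lift _ R (SC × SC) fun PQ =>
    Finsupp.mapDomain (fun RS : SC × SC => (PQ.1, RS.1, RS.2)) (d (Finsupp.single PQ.2 1))

/-- `ε ⊗ id : T⊗T → T`, where `ε` is the projection onto `T_0 ≅ R`
(the coefficient of the empty set composition). -/
noncomputable def epsFst : FM2 R →ₗ[R] FM R :=
  Finsupp.lift _ R (SC × SC) fun PQ =>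
    if PQ.1 = ([] : SC) then Finsupp.single PQ.2 1 else 0

/-- `id ⊗ ε : T⊗T → T`. -/
noncomputable def epsSnd : FM2 R →ₗ[R] FM R :=
  Finsupp.lift _ R (SC × SC) fun PQ =>
    if PQ.2 = ([] : SC) then Finsupp.single PQ.1 1 else 0

/-- The twist map `x ⊗ y ↦ y ⊗ x` on `T_• ⊗ T_•`. -/
noncomputable def twistL : FM2 R →ₗ[R] FM2 R :=
  Finsupp.lift _ R (SC × SC) fun PQ => Finsupp.single (PQ.2, PQ.1) 1

/-- The counit: projection onto the degree-0 component `T_0 ≅ R`. -/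
noncomputable def counitL : FM R →ₗ[R] R :=
  Finsupp.lift _ R SC fun P => if P = ([] : SC) then 1 else 0

/-- `w` is the word `(α(1),…,α(n))` of a permutation `α ∈ S_n`. -/
def IsPermWord (n : ℕ) (w : List ℕ) : Prop := w.Nodup ∧ w.toFinset = Finset.Icc 1 n

/-- The embedding of permutations into set compositions:
`α ↦ ({α(1)},…,{α(n)})`. -/
def iotaW (w : List ℕ) : SC := w.map fun a => ({a} : Finset ℕ)

/-- Concatenation product of permutation words: `α × β = α · (β + n)`. -/
def concatW (u v : List ℕ) : List ℕ := u ++ v.map (· + u.length)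

/-- `st(w|_S)`: the subword of `w` of entries lying in `S`, standardized. -/
def stW (S : Finset ℕ) (w : List ℕ) : List ℕ :=
  (w.filter fun a => decide (a ∈ S)).map (rankIn S)

/-- The ℤ-linear embedding `ι : S_• → T_•`, `α ↦ ({α(1)},…,{α(n)})`. -/
noncomputable def iotaL : (List ℕ →₀ ℤ) →ₗ[ℤ] FM ℤ :=
  Finsupp.lift _ ℤ _ fun w => Finsupp.single (iotaW w) 1

/-- `ι ⊗ ι : S_• ⊗ S_• → T_• ⊗ T_•`. -/
noncomputable def iota2L : ((List ℕ × List ℕ) →₀ ℤ) →ₗ[ℤ] FM2 ℤ :=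
  Finsupp.lift _ ℤ _ fun uv => Finsupp.single (iotaW uv.1, iotaW uv.2) 1

/-- The Malvenuto–Reutenauer convolution product on `S_•` on basis elements:
`α ∗ β = q_{(n,m)} · (α × β)`, where `q_{(n,m)}` is the sum of all permutations
increasing on the first `n` and on the last `m` letters (each such permutation
being recorded by the set `A` of its first `n` values). -/
noncomputable def mrB (α β : List ℕ) : List ℕ →₀ ℤ :=
  ∑ A ∈ ((Finset.Icc 1 (α.length + β.length)).powerset.filter
      fun A => A.card = α.length),
    Finsupp.single
      ((concatW α β).map fun i =>
        ((A.sort (· ≤ ·)) ++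
          (((Finset.Icc 1 (α.length + β.length)) \ A).sort (· ≤ ·))).getD (i - 1) 0) 1

/-- The restricted coproduct on `S_•`:
`δ̄(α) = Σ_{i=0}^{n} α|_{[i]} ⊗ st(α|_{{i+1,…,n}})`. -/
noncomputable def dBarS : (List ℕ →₀ ℤ) →ₗ[ℤ] ((List ℕ × List ℕ) →₀ ℤ) :=
  Finsupp.lift _ ℤ _ fun w =>
    ∑ i ∈ Finset.range (w.length + 1),
      Finsupp.single
        (w.filter (fun a => decide (a ≤ i)),
          (w.filter (fun a => decide (i < a))).map (fun a => a - i)) 1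


/-!
On a permutation word all entries lie in `[1, n]`, so `ι` turns restriction to an interval
into filtering followed by a shift, and the relabelling `is_{[p],A}` into reading off the
increasing enumeration of `A`; the latter is exactly what the shuffle `q_A` does to the first
`p` letters of `α × β`. Both identities therefore hold term by term in the defining sums.
-/

theorem Finsupp.lift_single_one {R M X : Type*} [Semiring R] [AddCommMonoid M] [Module R M]
    (f : X → M) (x : X) : Finsupp.lift M R X f (Finsupp.single x 1) = f x := by
  simp [Finsupp.lift_apply]

theorem rankIn_Icc {lo hi a : ℕ} (h : a ∈ Icc lo hi) : rankIn (Icc lo hi) a = a + 1 - lo := by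
  have hfilter : (Icc lo hi).filter (· ≤ a) = Icc lo a := by
    ext y; simp only [mem_filter, mem_Icc] at h ⊢; omega
  rw [rankIn, hfilter, Nat.card_Icc]

theorem sup_id_Icc_one (n : ℕ) : (Icc 1 n).sup id = n := by
  rcases Nat.eq_zero_or_pos n with rfl | hn
  · rfl
  · exact le_antisymm (Finset.sup_le fun x hx => (mem_Icc.mp hx).2)
      (Finset.le_sup (f := id) (mem_Icc.mpr ⟨hn, le_rfl⟩))

namespace IsPermWord

variable {n : ℕ} {α : List ℕ}

theorem mem_Icc (h : IsPermWord n α) {a : ℕ} (ha : a ∈ α) : a ∈ Icc 1 n :=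
  h.2 ▸ List.mem_toFinset.mpr ha

theorem length_eq (h : IsPermWord n α) : α.length = n := by
  rw [← List.toFinset_card_of_nodup h.1, h.2, Nat.card_Icc, Nat.add_sub_cancel]

end IsPermWord

theorem relabelFun_Icc_one {m a : ℕ} (T : Finset ℕ) (ha : a ∈ Icc 1 m) :
    relabelFun (Icc 1 m) T a = (T.sort (· ≤ ·)).getD (a - 1) 0 := by
  rw [relabelFun, rankIn_Icc ha, Nat.add_sub_cancel]

theorem getD_sort_append_sort_of_le {A B : Finset ℕ} {a : ℕ} (ha : a ∈ Icc 1 A.card) :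
    (A.sort (· ≤ ·) ++ B.sort (· ≤ ·)).getD (a - 1) 0 = relabelFun (Icc 1 A.card) A a := by
  rw [relabelFun_Icc_one A ha, List.getD_append _ _ _ _ (by simp at ha ⊢; omega)]

theorem getD_sort_append_sort_add {A B : Finset ℕ} {k b : ℕ} (hb : b ∈ Icc 1 k) :
    (A.sort (· ≤ ·) ++ B.sort (· ≤ ·)).getD (b + A.card - 1) 0 = relabelFun (Icc 1 k) B b := by
  rw [relabelFun_Icc_one B hb, List.getD_append_right _ _ _ _ (by simp at hb ⊢; omega)]
  congr 1
  simp only [Finset.length_sort, mem_Icc] at hb ⊢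
  omega

theorem map_concatW_getD_sort_append_sort {A B : Finset ℕ} {k : ℕ} {u v : List ℕ}
    (hlen : u.length = A.card) (hu : ∀ a ∈ u, a ∈ Icc 1 A.card) (hv : ∀ b ∈ v, b ∈ Icc 1 k) :
    (concatW u v).map (fun i => (A.sort (· ≤ ·) ++ B.sort (· ≤ ·)).getD (i - 1) 0) =
      u.map (relabelFun (Icc 1 A.card) A) ++ v.map (relabelFun (Icc 1 k) B) := by
  rw [concatW, List.map_append, List.map_map, hlen]
  congr 1
  · exact List.map_congr_left fun a ha => getD_sort_append_sort_of_le (hu a ha)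
  · exact List.map_congr_left fun b hb => getD_sort_append_sort_add (hv b hb)

theorem stW_Icc_one {w : List ℕ} (hw : ∀ a ∈ w, 1 ≤ a) (p : ℕ) :
    stW (Icc 1 p) w = w.filter (fun a => decide (a ≤ p)) := by
  have hfilter : w.filter (fun a => decide (a ∈ Icc 1 p)) = w.filter (fun a => decide (a ≤ p)) :=
    List.filter_congr fun a ha => by simp [hw a ha]
  rw [stW, hfilter]
  conv_rhs => rw [← List.map_id (w.filter _)]
  refine List.map_congr_left fun a ha => ?_
  obtain ⟨haw, hap⟩ := List.mem_filter.mp ha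
  rw [rankIn_Icc (mem_Icc.mpr ⟨hw a haw, by simpa using hap⟩), Nat.add_sub_cancel, id]

theorem stW_Icc_succ {w : List ℕ} {n : ℕ} (hw : ∀ a ∈ w, a ≤ n) (p : ℕ) :
    stW (Icc (p + 1) n) w = (w.filter (fun a => decide (p < a))).map (fun a => a - p) := by
  have hfilter : w.filter (fun a => decide (a ∈ Icc (p + 1) n)) =
      w.filter (fun a => decide (p < a)) :=
    List.filter_congr fun a ha => by simp only [mem_Icc, decide_eq_decide]; have := hw a ha; omega
  rw [stW, hfilter]
  refine List.map_congr_left fun a ha => ?_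
  obtain ⟨haw, hap⟩ := List.mem_filter.mp ha
  rw [rankIn_Icc (mem_Icc.mpr ⟨by simpa using hap, hw a haw⟩)]
  omega

theorem iotaW_injective : Function.Injective iotaW :=
  List.map_injective_iff.mpr Finset.singleton_injective

theorem iotaW_append (u v : List ℕ) : iotaW (u ++ v) = iotaW u ++ iotaW v :=
  List.map_append

theorem ground_iotaW (w : List ℕ) : ground (iotaW w) = w.toFinset := by
  induction w with
  | nil => rfl
  | cons a t ih => rw [List.toFinset_cons, Finset.insert_eq, ← ih]; rfl

theorem maxG_iotaW {n : ℕ} {α : List ℕ} (h : IsPermWord n α) : maxG (iotaW α) = n := by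
  rw [maxG, ground_iotaW, h.2, sup_id_Icc_one]

theorem relabelSC_iotaW (S T : Finset ℕ) (w : List ℕ) :
    relabelSC S T (iotaW w) = iotaW (w.map (relabelFun S T)) := by
  simp [relabelSC, iotaW, Function.comp_def]

theorem restrictSC_iotaW (A : Finset ℕ) (w : List ℕ) :
    restrictSC A (iotaW w) = iotaW (stW A w) := by
  induction w with
  | nil => rfl
  | cons a t ih =>
    by_cases ha : a ∈ A
    · simp_all [restrictSC, stW, iotaW, Finset.singleton_inter_of_mem ha]
    · simp_all [restrictSC, stW, iotaW, Finset.singleton_inter_of_notMem ha]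

theorem iotaL_eq_mapDomain (f : List ℕ →₀ ℤ) : iotaL f = Finsupp.mapDomain iotaW f := by
  simp [iotaL, Finsupp.lift_apply, Finsupp.mapDomain, Finsupp.smul_single]

theorem iotaL_injective : Function.Injective iotaL := by
  intro f g h
  rw [iotaL_eq_mapDomain, iotaL_eq_mapDomain] at h
  exact Finsupp.mapDomain_injective iotaW_injective h

theorem iotaL_mrB {m k : ℕ} {α β : List ℕ} (hα : IsPermWord m α) (hβ : IsPermWord k β) :
    iotaL (mrB α β) = hatL ℤ (Finsupp.single (iotaW α) 1) (Finsupp.single (iotaW β) 1) := by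
  simp only [hatL, iotaL, Finsupp.lift_single_one]
  rw [hatB, maxG_iotaW hα, maxG_iotaW hβ, mrB, map_sum, hα.length_eq, hβ.length_eq]
  refine Finset.sum_congr rfl fun A hA => ?_
  have hAcard : A.card = m := (mem_filter.mp hA).2
  subst hAcard
  rw [Finsupp.lift_single_one, relabelSC_iotaW, relabelSC_iotaW, ← iotaW_append,
    map_concatW_getD_sort_append_sort hα.length_eq (fun _ => hα.mem_Icc) (fun _ => hβ.mem_Icc)]

theorem dBarL_single_iotaW {n : ℕ} {α : List ℕ} (hα : IsPermWord n α) :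
    dBarL ℤ (Finsupp.single (iotaW α) 1) = iota2L (dBarS (Finsupp.single α 1)) := by
  simp only [dBarL, dBarS, Finsupp.lift_single_one]
  rw [maxG_iotaW hα, hα.length_eq, map_sum]
  refine Finset.sum_congr rfl fun p _ => ?_
  rw [iota2L, Finsupp.lift_single_one, restrictSC_iotaW, restrictSC_iotaW,
    stW_Icc_one (fun a ha => (mem_Icc.mp (hα.mem_Icc ha)).1),
    stW_Icc_succ (fun a ha => (mem_Icc.mp (hα.mem_Icc ha)).2)]

/-- **Theorem.** The ℤ-linear map `ι : S_• → T_•`, `α ↦ ({α(1)},…,{α(n)})`, is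
an injective morphism of graded bialgebras from the Malvenuto–Reutenauer Hopf
algebra `(S_•, ∗, δ̄)` to `(T_•, ∗̂, δ̄)` : `ι(α ∗ β) = ι(α) ∗̂ ι(β)` and
`δ̄(ι(α)) = (ι ⊗ ι)(δ̄(α))`.  Hence the Malvenuto–Reutenauer Hopf algebra
embeds into `(T_•, ∗̂, δ̄)` as a Hopf subalgebra. -/
theorem malvenuto_reutenauer_embedding :
    Function.Injective ⇑iotaL ∧
    (∀ (m k : ℕ) (α β : List ℕ), IsPermWord m α → IsPermWord k β →
        iotaL (mrB α β) =
          hatL ℤ (Finsupp.single (iotaW α) 1) (Finsupp.single (iotaW β) 1)) ∧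
    (∀ (n : ℕ) (α : List ℕ), IsPermWord n α →
        dBarL ℤ (Finsupp.single (iotaW α) 1) = iota2L (dBarS (Finsupp.single α 1))) :=
  ⟨iotaL_injective, fun _ _ _ _ => iotaL_mrB, fun _ _ => dBarL_single_iotaW⟩
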